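/- arXiv:2402.14435 — 3 statements merged into one kernel-verified Lean document; each statement's English description precedes it below -/
import Mathlib

section
/- Let T > 0, let μ, ν, h : [0,T] → [0,∞) be Lebesgue measurable with μ and ν² integrable on [0,T] and μ(s) + ν(s)² > 0 for almost every s. Let θ > 1 and set β := (3θ+1)/4 and ρ := (θ+1)/2. Then (∫₀ᵀ exp(∫₀ˢ (β·μ(r) + (ρ/2)·ν(r)²) dr) · h(s) ds)² ≤ (2/(θ−1)) · ∫₀ᵀ exp(2θ·∫₀ˢ (μ(r) + (1/2)·ν(r)²) dr) · h(s)²/(μ(s) + ν(s)²) ds, where both sides are interpreted as Lebesgue integrals of nonnegative functions (the inequality holds in [0,∞]). -/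
/-! With `w₁ = μ + ν²/2`, `w₂ = μ + ν²` and `Wᵢ(s) = ∫₀ˢ wᵢ`, the choice of `β` and `ρ` makes the
exponent on the left equal to `θ W₁ - c W₂` with `c = (θ - 1)/4`. Cauchy–Schwarz applied to the
factorisation `(e^{θ W₁} h / √w₂) · (e^{-c W₂} √w₂)` leaves the factor `∫₀ᵀ e^{-2c W₂} w₂`, which
is at most `1/(2c) = 2/(θ - 1)`: it is the integral of the a.e. derivative of the monotone function
`-e^{-2c W₂}/(2c)`, and the integral of the derivative of a monotone function is bounded by its
increment. -/

open MeasureTheory Set Real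

theorem ENNReal.sq_lintegral_mul_le {α : Type*} [MeasurableSpace α] {μ : Measure α}
    {f g : α → ENNReal} (hf : AEMeasurable f μ) (hg : AEMeasurable g μ) :
    (∫⁻ a, f a * g a ∂μ) ^ 2 ≤ (∫⁻ a, f a ^ 2 ∂μ) * ∫⁻ a, g a ^ 2 ∂μ := by
  have hsqrt (X : ENNReal) : (X ^ (1 / 2 : ℝ)) ^ 2 = X := by
    rw [← ENNReal.rpow_natCast, ← ENNReal.rpow_mul]
    norm_num
  have hCS := ENNReal.lintegral_mul_le_Lp_mul_Lq μ Real.HolderConjugate.two_two hf hg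
  simp only [Pi.mul_apply, ENNReal.rpow_two] at hCS
  calc (∫⁻ a, f a * g a ∂μ) ^ 2
      ≤ ((∫⁻ a, f a ^ 2 ∂μ) ^ (1 / 2 : ℝ) * (∫⁻ a, g a ^ 2 ∂μ) ^ (1 / 2 : ℝ)) ^ 2 := by
        gcongr
    _ = (∫⁻ a, f a ^ 2 ∂μ) * ∫⁻ a, g a ^ 2 ∂μ := by rw [mul_pow, hsqrt, hsqrt]

theorem ENNReal.ofReal_pow_le (x : ℝ) (n : ℕ) : ENNReal.ofReal x ^ n ≤ ENNReal.ofReal (x ^ n) := by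
  rcases le_total 0 x with hx | hx
  · rw [ENNReal.ofReal_pow hx]
  · rcases n with _ | n <;> simp [ENNReal.ofReal_of_nonpos hx]

theorem sq_lintegral_ofReal_mul_le {α : Type*} [MeasurableSpace α] {μ : Measure α}
    {u v : α → ℝ} (hu : AEMeasurable u μ) (hv : AEMeasurable v μ) (hv0 : 0 ≤ᵐ[μ] v) :
    (∫⁻ a, ENNReal.ofReal (u a * v a) ∂μ) ^ 2
      ≤ (∫⁻ a, ENNReal.ofReal (u a ^ 2) ∂μ) * ∫⁻ a, ENNReal.ofReal (v a ^ 2) ∂μ := by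
  have hsplit : ∀ᵐ a ∂μ,
      ENNReal.ofReal (u a * v a) = ENNReal.ofReal (u a) * ENNReal.ofReal (v a) := by
    filter_upwards [hv0] with a ha using ENNReal.ofReal_mul' ha
  rw [lintegral_congr_ae hsplit]
  refine (ENNReal.sq_lintegral_mul_le hu.ennreal_ofReal hv.ennreal_ofReal).trans ?_
  gcongr <;> exact ENNReal.ofReal_pow_le _ 2

theorem measurable_setIntegral_Ioc {w : ℝ → ℝ} (hw : Measurable w) (a : ℝ) :
    Measurable fun s => ∫ r in Ioc a s, w r := by
  have hS : MeasurableSet {p : ℝ × ℝ | p.2 ∈ Ioc a p.1} :=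
    (measurableSet_lt measurable_const measurable_snd).inter
      (measurableSet_le measurable_snd measurable_fst)
  have : StronglyMeasurable (Function.uncurry fun s r => (Ioc a s).indicator w r) :=
    (Measurable.ite hS (hw.comp measurable_snd) measurable_const).stronglyMeasurable
  simpa only [integral_indicator measurableSet_Ioc] using
    this.integral_prod_right (ν := volume).measurable

theorem integral_exp_neg_mul_primitive_mul_le {w : ℝ → ℝ} {a T : ℝ} (ha : 0 < a) (hT : 0 ≤ T)
    (hw : IntervalIntegrable w volume 0 T) (hw0 : 0 ≤ᵐ[volume.restrict (Ioc 0 T)] w) :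
    ∫ s in 0..T, exp (-(a * ∫ r in 0..s, w r)) * w s ≤ 1 / a := by
  set W : ℝ → ℝ := fun s => ∫ r in 0..s, w r
  set F : ℝ → ℝ := fun s => -exp (-(a * W s)) / a
  have hW : MonotoneOn W (Icc 0 T) := fun x hx y hy hxy =>
    intervalIntegral.integral_mono_interval le_rfl hx.1 hxy
      (ae_restrict_of_ae_restrict_of_subset (Ioc_subset_Ioc_right hy.2) hw0)
      (hw.mono_set (uIcc_subset_uIcc_left (by simp [uIcc_of_le hT, hy.1, hy.2])))
  have hF : MonotoneOn F (Icc 0 T) := fun x hx y hy hxy => by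
    have := hW hx hy hxy
    simp only [F]
    gcongr
  have hderiv : ∀ᵐ s, s ∈ uIoc 0 T → deriv F s = exp (-(a * W s)) * w s := by
    filter_upwards [hw.ae_hasDerivAt_integral] with s hs hsT
    have hW' := hs (uIoc_subset_uIcc hsT) 0 (by simp)
    have hF' : HasDerivAt F (exp (-(a * W s)) * w s) s :=
      ((hW'.const_mul a).fun_neg.exp.fun_neg.div_const a).congr_deriv
        (by field_simp; exact mul_comm _ _)
    exact hF'.deriv
  have hFT : F 0 ≤ F T := hF (by simp [hT]) (by simp [hT]) hT
  calc ∫ s in 0..T, exp (-(a * W s)) * w s = ∫ s in 0..T, deriv F s :=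
        intervalIntegral.integral_congr_ae (hderiv.mono fun s hs hsT => (hs hsT).symm)
    _ ≤ F T - F 0 := by
        have := (uIcc_of_le hT ▸ hF).intervalIntegral_deriv_mem_uIcc
        rw [uIcc_of_le (sub_nonneg.2 hFT)] at this
        exact this.2
    _ ≤ 1 / a := by
        simp only [F, W, intervalIntegral.integral_same, mul_zero, neg_zero, exp_zero]
        have := exp_pos (-(a * ∫ r in 0..T, w r))
        rw [div_sub_div_same, div_le_div_iff_of_pos_right ha]
        linarith

theorem lintegral_exp_neg_mul_primitive_mul_le {w : ℝ → ℝ} {a T : ℝ} (ha : 0 < a)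
    (hwm : Measurable w) (hw : IntegrableOn w (Ioc 0 T))
    (hw0 : 0 ≤ᵐ[volume.restrict (Ioc 0 T)] w) :
    ∫⁻ s in Ioc 0 T, ENNReal.ofReal (exp (-(a * ∫ r in Ioc 0 s, w r)) * w s)
      ≤ ENNReal.ofReal (1 / a) := by
  rcases le_total T 0 with hT | hT
  · simp [Ioc_eq_empty_of_le hT]
  have hprim_nonneg : ∀ s ∈ Ioc 0 T, 0 ≤ ∫ r in Ioc 0 s, w r := fun s hs =>
    setIntegral_nonneg_of_ae_restrict
      (ae_restrict_of_ae_restrict_of_subset (Ioc_subset_Ioc_right hs.2) hw0)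
  have hint : IntegrableOn (fun s => exp (-(a * ∫ r in Ioc 0 s, w r)) * w s) (Ioc 0 T) := by
    have hprim := measurable_setIntegral_Ioc hwm 0
    refine Integrable.mono hw (by fun_prop) ?_
    filter_upwards [ae_restrict_mem measurableSet_Ioc] with s hs
    rw [norm_mul, norm_of_nonneg (exp_pos _).le]
    exact mul_le_of_le_one_left (norm_nonneg _)
      (exp_le_one_iff.2 (neg_nonpos.2 (mul_nonneg ha.le (hprim_nonneg s hs))))
  rw [← ofReal_integral_eq_lintegral_ofReal hint]
  · refine ENNReal.ofReal_le_ofReal ?_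
    calc ∫ s in Ioc 0 T, exp (-(a * ∫ r in Ioc 0 s, w r)) * w s
        = ∫ s in 0..T, exp (-(a * ∫ r in 0..s, w r)) * w s := by
          rw [intervalIntegral.integral_of_le hT]
          refine setIntegral_congr_fun measurableSet_Ioc fun s hs => ?_
          rw [intervalIntegral.integral_of_le hs.1.le]
      _ ≤ 1 / a := integral_exp_neg_mul_primitive_mul_le ha hT
          ((intervalIntegrable_iff_integrableOn_Ioc_of_le hT).2 hw) hw0
  · filter_upwards [hw0] with s hs using mul_nonneg (exp_pos _).le hs

theorem sq_lintegral_ofReal_exp_sub_mul_le {α : Type*} [MeasurableSpace α] {μ : Measure α}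
    {A B h w : α → ℝ} (hA : AEMeasurable A μ) (hB : AEMeasurable B μ) (hh : AEMeasurable h μ)
    (hw : AEMeasurable w μ) (hw0 : ∀ᵐ a ∂μ, 0 < w a) :
    (∫⁻ a, ENNReal.ofReal (exp (A a - B a) * h a) ∂μ) ^ 2
      ≤ (∫⁻ a, ENNReal.ofReal (exp (2 * A a) * (h a ^ 2 / w a)) ∂μ)
        * ∫⁻ a, ENNReal.ofReal (exp (-(2 * B a)) * w a) ∂μ := by
  set u : α → ℝ := fun a => exp (A a) * (h a / √(w a))
  set v : α → ℝ := fun a => exp (-B a) * √(w a)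
  have huv : ∀ᵐ a ∂μ, exp (A a - B a) * h a = u a * v a := by
    filter_upwards [hw0] with a ha
    have : √(w a) ≠ 0 := (sqrt_pos.2 ha).ne'
    simp only [u, v, sub_eq_add_neg, exp_add]
    field_simp
  have hu2 : ∀ᵐ a ∂μ, u a ^ 2 = exp (2 * A a) * (h a ^ 2 / w a) := by
    filter_upwards [hw0] with a ha
    rw [mul_pow, div_pow, sq_sqrt ha.le, ← exp_nat_mul, Nat.cast_ofNat]
  have hv2 : ∀ᵐ a ∂μ, v a ^ 2 = exp (-(2 * B a)) * w a := by
    filter_upwards [hw0] with a ha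
    rw [mul_pow, sq_sqrt ha.le, ← exp_nat_mul, Nat.cast_ofNat, mul_neg]
  calc _ = (∫⁻ a, ENNReal.ofReal (u a * v a) ∂μ) ^ 2 := by
        rw [lintegral_congr_ae (huv.mono fun a ha => congrArg ENNReal.ofReal ha)]
    _ ≤ (∫⁻ a, ENNReal.ofReal (u a ^ 2) ∂μ) * ∫⁻ a, ENNReal.ofReal (v a ^ 2) ∂μ :=
        sq_lintegral_ofReal_mul_le (by simp only [u]; fun_prop) (by simp only [v]; fun_prop)
          (Filter.Eventually.of_forall fun a => by simp only [v]; positivity)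
    _ = _ := by
        rw [lintegral_congr_ae (hu2.mono fun a ha => congrArg ENNReal.ofReal ha),
          lintegral_congr_ae (hv2.mono fun a ha => congrArg ENNReal.ofReal ha)]

theorem weighted_cauchy_schwarz_H1a_implies_H1_general (T : ℝ) (μ ν h : ℝ → ℝ)
    (hμm : Measurable μ) (hνm : Measurable ν) (hhm : Measurable h)
    (hμint : IntegrableOn μ (Set.Icc 0 T))
    (hνint : IntegrableOn (fun s => (ν s) ^ 2) (Set.Icc 0 T))
    (hpos : ∀ᵐ s ∂(volume.restrict (Set.Icc (0:ℝ) T)), 0 < μ s + (ν s) ^ 2)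
    (θ β ρ : ℝ) (hθ : 1 < θ) (hβ : β = (3 * θ + 1) / 4) (hρ : ρ = (θ + 1) / 2) :
    (∫⁻ s in Set.Ioc (0:ℝ) T,
        ENNReal.ofReal
          (Real.exp (∫ r in Set.Ioc (0:ℝ) s, (β * μ r + ρ / 2 * (ν r) ^ 2)) * h s)) ^ 2
      ≤ ENNReal.ofReal (2 / (θ - 1)) *
        ∫⁻ s in Set.Ioc (0:ℝ) T,
          ENNReal.ofReal
            (Real.exp (2 * θ * ∫ r in Set.Ioc (0:ℝ) s, (μ r + 1 / 2 * (ν r) ^ 2)) *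
              ((h s) ^ 2 / (μ s + (ν s) ^ 2))) := by
  set w₁ : ℝ → ℝ := fun r => μ r + 1 / 2 * ν r ^ 2
  set w₂ : ℝ → ℝ := fun r => μ r + ν r ^ 2
  set W₁ : ℝ → ℝ := fun s => ∫ r in Ioc 0 s, w₁ r
  set W₂ : ℝ → ℝ := fun s => ∫ r in Ioc 0 s, w₂ r
  have hw₁ : IntegrableOn w₁ (Icc 0 T) := hμint.add (hνint.const_mul _)
  have hw₂ : IntegrableOn w₂ (Icc 0 T) := hμint.add hνint
  have hw₂m : Measurable w₂ := by fun_prop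
  have hW₁m : Measurable W₁ := measurable_setIntegral_Ioc (by fun_prop) 0
  have hW₂m : Measurable W₂ := measurable_setIntegral_Ioc hw₂m 0
  have hw₂pos : ∀ᵐ s ∂volume.restrict (Ioc 0 T), 0 < w₂ s :=
    ae_restrict_of_ae_restrict_of_subset Ioc_subset_Icc_self hpos
  have hweight : ∀ s ∈ Ioc 0 T,
      ∫ r in Ioc 0 s, (β * μ r + ρ / 2 * ν r ^ 2) = θ * W₁ s - (θ - 1) / 4 * W₂ s := by
    intro s hs
    have hsub : Ioc 0 s ⊆ Icc 0 T := fun r hr => ⟨hr.1.le, hr.2.trans hs.2⟩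
    rw [← integral_const_mul, ← integral_const_mul, ← integral_sub
      ((hw₁.mono_set hsub).const_mul _) ((hw₂.mono_set hsub).const_mul _)]
    congr 1 with r
    simp only [w₁, w₂, hβ, hρ]
    ring
  have hW₂ : ∫⁻ s in Ioc 0 T, ENNReal.ofReal (exp (-(2 * ((θ - 1) / 4 * W₂ s))) * w₂ s)
      ≤ ENNReal.ofReal (2 / (θ - 1)) := by
    refine le_of_eq_of_le (lintegral_congr fun s => by simp only [W₂]; ring_nf)
      ((lintegral_exp_neg_mul_primitive_mul_le (a := (θ - 1) / 2) (by linarith) hw₂m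
        (hw₂.mono_set Ioc_subset_Icc_self) (hw₂pos.mono fun s hs => hs.le)).trans_eq ?_)
    rw [one_div_div]
  calc _ = (∫⁻ s in Ioc 0 T, ENNReal.ofReal (exp (θ * W₁ s - (θ - 1) / 4 * W₂ s) * h s)) ^ 2 := by
        rw [setLIntegral_congr_fun measurableSet_Ioc fun s hs => by rw [hweight s hs]]
    _ ≤ (∫⁻ s in Ioc 0 T, ENNReal.ofReal (exp (2 * (θ * W₁ s)) * (h s ^ 2 / w₂ s))) *
          ENNReal.ofReal (2 / (θ - 1)) :=
        (sq_lintegral_ofReal_exp_sub_mul_le (hW₁m.const_mul _).aemeasurable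
          (hW₂m.const_mul _).aemeasurable hhm.aemeasurable hw₂m.aemeasurable hw₂pos).trans
          (by gcongr)
    _ = _ := by
        rw [mul_comm]
        simp only [mul_assoc]
        rfl

/-- Remark 3.3(ii): the Cauchy–Schwarz computation showing that (H1a) implies (H1).
With `θ > 1`, `β := (3θ+1)/4` and `ρ := (θ+1)/2`,
`(∫₀ᵀ exp(∫₀ˢ (βμ + (ρ/2)ν²)) h(s) ds)² ≤ (2/(θ−1)) ∫₀ᵀ exp(2θ∫₀ˢ(μ + ν²/2)) h(s)²/(μ(s)+ν(s)²) ds`,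
both sides interpreted as Lebesgue integrals of nonnegative functions in `[0,∞]`. -/
theorem weighted_cauchy_schwarz_H1a_implies_H1 (T : ℝ) (hT : 0 < T) (μ ν h : ℝ → ℝ)
    (hμm : Measurable μ) (hνm : Measurable ν) (hhm : Measurable h)
    (hμ0 : ∀ s ∈ Set.Icc (0:ℝ) T, 0 ≤ μ s)
    (hν0 : ∀ s ∈ Set.Icc (0:ℝ) T, 0 ≤ ν s)
    (hh0 : ∀ s ∈ Set.Icc (0:ℝ) T, 0 ≤ h s)
    (hμint : IntegrableOn μ (Set.Icc 0 T))
    (hνint : IntegrableOn (fun s => (ν s) ^ 2) (Set.Icc 0 T))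
    (hpos : ∀ᵐ s ∂(volume.restrict (Set.Icc (0:ℝ) T)), 0 < μ s + (ν s) ^ 2)
    (θ β ρ : ℝ) (hθ : 1 < θ) (hβ : β = (3 * θ + 1) / 4) (hρ : ρ = (θ + 1) / 2) :
    (∫⁻ s in Set.Ioc (0:ℝ) T,
        ENNReal.ofReal
          (Real.exp (∫ r in Set.Ioc (0:ℝ) s, (β * μ r + ρ / 2 * (ν r) ^ 2)) * h s)) ^ 2
      ≤ ENNReal.ofReal (2 / (θ - 1)) *
        ∫⁻ s in Set.Ioc (0:ℝ) T,
          ENNReal.ofReal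
            (Real.exp (2 * θ * ∫ r in Set.Ioc (0:ℝ) s, (μ r + 1 / 2 * (ν r) ^ 2)) *
              ((h s) ^ 2 / (μ s + (ν s) ^ 2))) :=
  weighted_cauchy_schwarz_H1a_implies_H1_general T μ ν h hμm hνm hhm hμint hνint hpos θ β ρ hθ hβ hρ
end

section
/- Let E be a real inner product space with inner product ⟨·,·⟩ and norm ‖·‖, let G : E → E, and let μ ≥ 0, ψ ≥ 0, c > 0, α > 0, r > 0 be real numbers. Define θ : [0,∞) → ℝ by θ(u) = α for 0 ≤ u ≤ rα, θ(u) = (r+1)α − u for rα < u ≤ (r+1)α, θ(u) = 0 for u > (r+1)α, set λ := c / max(ψ, cα), and define h : E → E by h(y) := λ·θ(‖y‖)·(G(y) − G(0)) + G(0). Assume: (i) ⟨y₁ − y₂, G(y₁) − G(y₂)⟩ ≤ μ·‖y₁ − y₂‖² for all y₁, y₂ ∈ E; and (ii) ‖G(y) − G(0)‖ ≤ ψ whenever ‖y‖ ≤ (r+1)α. Then ⟨y₁ − y₂, h(y₁) − h(y₂)⟩ ≤ (μ + c)·‖y₁ − y₂‖² for all y₁, y₂ ∈ E. -/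
open scoped InnerProductSpace

lemma theta_bounds (α r : ℝ) (θ : ℝ → ℝ) (hα : 0 < α) (hr : 0 < r)
    (hθ1 : ∀ u, 0 ≤ u → u ≤ r * α → θ u = α)
    (hθ2 : ∀ u, r * α < u → u ≤ (r + 1) * α → θ u = (r + 1) * α - u)
    (hθ3 : ∀ u, (r + 1) * α < u → θ u = 0)
    (u : ℝ) (hu : 0 ≤ u) : 0 ≤ θ u ∧ θ u ≤ α := by
  rcases le_or_gt u (r * α) with h1 | h1
  · rw [hθ1 u hu h1]; constructor <;> nlinarith
  rcases le_or_gt u ((r + 1) * α) with h2 | h2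
  · rw [hθ2 u h1 h2]; constructor <;> nlinarith
  · rw [hθ3 u h2]; constructor <;> nlinarith

lemma theta_lip_aux (α r : ℝ) (θ : ℝ → ℝ) (hα : 0 < α) (hr : 0 < r)
    (hθ1 : ∀ u, 0 ≤ u → u ≤ r * α → θ u = α)
    (hθ2 : ∀ u, r * α < u → u ≤ (r + 1) * α → θ u = (r + 1) * α - u)
    (hθ3 : ∀ u, (r + 1) * α < u → θ u = 0)
    (u v : ℝ) (hu : 0 ≤ u) (huv : u ≤ v) : |θ u - θ v| ≤ v - u := by
  have hv : 0 ≤ v := le_trans hu huv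
  rcases le_or_gt v (r * α) with h1 | h1
  · rw [hθ1 u hu (le_trans huv h1), hθ1 v hv h1, abs_le]
    constructor <;> linarith
  rcases le_or_gt u (r * α) with h2 | h2
  · rw [hθ1 u hu h2]
    rcases le_or_gt v ((r + 1) * α) with h3 | h3
    · rw [hθ2 v h1 h3, abs_le]; constructor <;> nlinarith
    · rw [hθ3 v h3, abs_le]; constructor <;> nlinarith
  rcases le_or_gt u ((r + 1) * α) with h3 | h3
  · rw [hθ2 u h2 h3]
    rcases le_or_gt v ((r + 1) * α) with h4 | h4
    · rw [hθ2 v h1 h4, abs_le]; constructor <;> linarith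
    · rw [hθ3 v h4, abs_le]; constructor <;> nlinarith
  · rw [hθ3 u h3, hθ3 v (lt_of_lt_of_le h3 huv), abs_le]
    constructor <;> linarith

lemma theta_lip (α r : ℝ) (θ : ℝ → ℝ) (hα : 0 < α) (hr : 0 < r)
    (hθ1 : ∀ u, 0 ≤ u → u ≤ r * α → θ u = α)
    (hθ2 : ∀ u, r * α < u → u ≤ (r + 1) * α → θ u = (r + 1) * α - u)
    (hθ3 : ∀ u, (r + 1) * α < u → θ u = 0)
    (u v : ℝ) (hu : 0 ≤ u) (hv : 0 ≤ v) : |θ u - θ v| ≤ |u - v| := by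
  rcases le_total u v with huv | huv
  · have := theta_lip_aux α r θ hα hr hθ1 hθ2 hθ3 u v hu huv
    rwa [abs_sub_comm u v, abs_of_nonneg (show (0:ℝ) ≤ v - u by linarith)]
  · have := theta_lip_aux α r θ hα hr hθ1 hθ2 hθ3 v u hv huv
    rw [abs_sub_comm (θ u) (θ v), abs_of_nonneg (show (0:ℝ) ≤ u - v by linarith)]
    exact this

lemma truncated_key
    {E : Type*} [NormedAddCommGroup E] [InnerProductSpace ℝ E]
    (G : E → E) (μ ψ c α r : ℝ)
    (hμ : 0 ≤ μ) (hψ : 0 ≤ ψ) (hc : 0 < c) (hα : 0 < α) (hr : 0 < r)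
    (θ : ℝ → ℝ)
    (hθ1 : ∀ u, 0 ≤ u → u ≤ r * α → θ u = α)
    (hθ2 : ∀ u, r * α < u → u ≤ (r + 1) * α → θ u = (r + 1) * α - u)
    (hθ3 : ∀ u, (r + 1) * α < u → θ u = 0)
    (lam : ℝ) (hlam : lam = c / max ψ (c * α))
    (h : E → E) (hh : ∀ y, h y = (lam * θ ‖y‖) • (G y - G 0) + G 0)
    (hmono : ∀ y₁ y₂ : E, ⟪y₁ - y₂, G y₁ - G y₂⟫_ℝ ≤ μ * ‖y₁ - y₂‖ ^ 2)
    (hbound : ∀ y : E, ‖y‖ ≤ (r + 1) * α → ‖G y - G 0‖ ≤ ψ)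
    (y₁ y₂ : E) (hy₂ : ‖y₂‖ ≤ (r + 1) * α) :
    ⟪y₁ - y₂, h y₁ - h y₂⟫_ℝ ≤ (μ + c) * ‖y₁ - y₂‖ ^ 2 := by
  have hmax : (0:ℝ) < max ψ (c * α) := lt_max_of_lt_right (mul_pos hc hα)
  have hlam0 : 0 ≤ lam := by rw [hlam]; positivity
  set φ₁ := lam * θ ‖y₁‖ with hφ₁def
  set φ₂ := lam * θ ‖y₂‖ with hφ₂def
  set d := y₁ - y₂ with hd
  have hθb1 := theta_bounds α r θ hα hr hθ1 hθ2 hθ3 ‖y₁‖ (norm_nonneg _)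
  have hθb2 := theta_bounds α r θ hα hr hθ1 hθ2 hθ3 ‖y₂‖ (norm_nonneg _)
  have hlamα : lam * α ≤ 1 := by
    rw [hlam, div_mul_eq_mul_div, div_le_one hmax]
    exact le_max_right _ _
  have hlamψ : lam * ψ ≤ c := by
    rw [hlam, div_mul_eq_mul_div, div_le_iff₀ hmax]
    exact mul_le_mul_of_nonneg_left (le_max_left _ _) hc.le
  have hφ₁0 : 0 ≤ φ₁ := mul_nonneg hlam0 hθb1.1
  have hφ₁1 : φ₁ ≤ 1 :=
    le_trans (mul_le_mul_of_nonneg_left hθb1.2 hlam0) hlamα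
  -- Lipschitz bound on φ₁ - φ₂
  have hlip : |φ₁ - φ₂| ≤ lam * ‖d‖ := by
    rw [hφ₁def, hφ₂def, ← mul_sub, abs_mul, abs_of_nonneg hlam0]
    refine mul_le_mul_of_nonneg_left ?_ hlam0
    refine le_trans (theta_lip α r θ hα hr hθ1 hθ2 hθ3 _ _
      (norm_nonneg _) (norm_nonneg _)) ?_
    exact abs_norm_sub_norm_le y₁ y₂
  have hb : ‖G y₂ - G 0‖ ≤ ψ := hbound y₂ hy₂
  have expand : ⟪d, h y₁ - h y₂⟫_ℝ
      = φ₁ * ⟪d, G y₁ - G y₂⟫_ℝ + (φ₁ - φ₂) * ⟪d, G y₂ - G 0⟫_ℝ := by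
    have key : h y₁ - h y₂
        = φ₁ • (G y₁ - G y₂) + (φ₁ - φ₂) • (G y₂ - G 0) := by
      rw [hh y₁, hh y₂, hφ₁def, hφ₂def]
      module
    rw [key, inner_add_right, real_inner_smul_right, real_inner_smul_right]
  rw [expand]
  have hX := hmono y₁ y₂
  have hXμ : 0 ≤ μ * ‖d‖ ^ 2 := by positivity
  have term1 : φ₁ * ⟪d, G y₁ - G y₂⟫_ℝ ≤ μ * ‖d‖ ^ 2 := by
    nlinarith [hX, hφ₁0, hφ₁1, hXμ]
  have hY : |⟪d, G y₂ - G 0⟫_ℝ| ≤ ‖d‖ * ψ := by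
    refine le_trans (abs_real_inner_le_norm _ _) ?_
    exact mul_le_mul_of_nonneg_left hb (norm_nonneg _)
  have term2 : (φ₁ - φ₂) * ⟪d, G y₂ - G 0⟫_ℝ ≤ c * ‖d‖ ^ 2 := by
    calc (φ₁ - φ₂) * ⟪d, G y₂ - G 0⟫_ℝ
        ≤ |(φ₁ - φ₂) * ⟪d, G y₂ - G 0⟫_ℝ| := le_abs_self _
      _ = |φ₁ - φ₂| * |⟪d, G y₂ - G 0⟫_ℝ| := abs_mul _ _
      _ ≤ (lam * ‖d‖) * (‖d‖ * ψ) := by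
          exact mul_le_mul hlip hY (abs_nonneg _)
            (mul_nonneg hlam0 (norm_nonneg _))
      _ = (lam * ψ) * ‖d‖ ^ 2 := by ring
      _ ≤ c * ‖d‖ ^ 2 := by nlinarith [sq_nonneg ‖d‖]
  linarith

/-- The monotonicity computation (4.23): the truncated map
`h(y) := (c/(ψ ∨ cα))·θ(‖y‖)·(G(y) − G(0)) + G(0)` satisfies the monotonicity
condition with constant `μ + c`, where `θ` is the truncation function of (4.19),
`G` is `μ`-monotone, and `‖G(y) − G(0)‖ ≤ ψ` whenever `‖y‖ ≤ (r+1)α`. -/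
theorem truncated_generator_monotone
    {E : Type*} [NormedAddCommGroup E] [InnerProductSpace ℝ E]
    (G : E → E) (μ ψ c α r : ℝ)
    (hμ : 0 ≤ μ) (hψ : 0 ≤ ψ) (hc : 0 < c) (hα : 0 < α) (hr : 0 < r)
    (θ : ℝ → ℝ)
    (hθ1 : ∀ u, 0 ≤ u → u ≤ r * α → θ u = α)
    (hθ2 : ∀ u, r * α < u → u ≤ (r + 1) * α → θ u = (r + 1) * α - u)
    (hθ3 : ∀ u, (r + 1) * α < u → θ u = 0)
    (lam : ℝ) (hlam : lam = c / max ψ (c * α))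
    (h : E → E) (hh : ∀ y, h y = (lam * θ ‖y‖) • (G y - G 0) + G 0)
    (hmono : ∀ y₁ y₂ : E, ⟪y₁ - y₂, G y₁ - G y₂⟫_ℝ ≤ μ * ‖y₁ - y₂‖ ^ 2)
    (hbound : ∀ y : E, ‖y‖ ≤ (r + 1) * α → ‖G y - G 0‖ ≤ ψ) :
    ∀ y₁ y₂ : E, ⟪y₁ - y₂, h y₁ - h y₂⟫_ℝ ≤ (μ + c) * ‖y₁ - y₂‖ ^ 2 := by
  intro y₁ y₂
  rcases le_or_gt ‖y₂‖ ((r + 1) * α) with hy₂ | hy₂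
  · exact truncated_key G μ ψ c α r hμ hψ hc hα hr θ hθ1 hθ2 hθ3 lam hlam
      h hh hmono hbound y₁ y₂ hy₂
  rcases le_or_gt ‖y₁‖ ((r + 1) * α) with hy₁ | hy₁
  · have hs : ⟪y₁ - y₂, h y₁ - h y₂⟫_ℝ = ⟪y₂ - y₁, h y₂ - h y₁⟫_ℝ := by
      rw [← neg_sub y₂ y₁, ← neg_sub (h y₂) (h y₁), inner_neg_neg]
    rw [hs, show ‖y₁ - y₂‖ = ‖y₂ - y₁‖ from norm_sub_rev _ _]
    exact truncated_key G μ ψ c α r hμ hψ hc hα hr θ hθ1 hθ2 hθ3 lam hlam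
      h hh hmono hbound y₂ y₁ hy₁
  · have h1 : h y₁ = G 0 := by rw [hh, hθ3 _ hy₁]; simp
    have h2 : h y₂ = G 0 := by rw [hh, hθ3 _ hy₂]; simp
    rw [h1, h2, sub_self, inner_zero_right]
    positivity
end

section
/- Let β ≥ 0 and r ≥ 0, let μ, μ̃ : [0,∞) → [0,∞) be continuous, and let φ : [0,∞) → [0,∞) be a nondecreasing convex function with φ(0) = 0. Define α : [0,∞) → ℝ by α(t) := e^{−t} / (1 + sup_{s∈[0,t]} exp(β·∫₀ˢ μ(r) dr)·μ̃(s)). Then: (i) α takes values in (0,1] and is non-increasing; and (ii) ∫₀^∞ exp(β·∫₀ᵗ μ(s) ds)·μ̃(t)·φ(r·α(t)) dt ≤ φ(r). -/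
open MeasureTheory Set Real

/-! Writing `f(t) = exp(β∫₀ᵗμ)·μ̃(t)` and `M(t) = sup_{[0,t]} f`, the factor `1 + M(t)` in the
denominator of `α(t)` dominates both `1` and `f(t)`, so `α ≤ e^{-t} ≤ 1` and `f(t)·α(t) ≤ e^{-t}`;
monotonicity of `M` makes `α` non-increasing. Convexity with `φ(0) = 0` gives
`φ(r·α(t)) ≤ α(t)·φ(r)`, so the integrand is at most `e^{-t}·φ(r)`, whose integral over `[0,∞)`
is `φ(r)`. -/

theorem ConvexOn.map_smul_le_smul_map {E : Type*} [AddCommGroup E] [Module ℝ E] {s : Set E}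
    {φ : E → ℝ} (hφ : ConvexOn ℝ s φ) (h0s : (0 : E) ∈ s) (hφ0 : φ 0 = 0) {x : E} (hx : x ∈ s)
    {a : ℝ} (ha₀ : 0 ≤ a) (ha₁ : a ≤ 1) : φ (a • x) ≤ a * φ x := by
  simpa [hφ0] using hφ.2 hx h0s ha₀ (sub_nonneg.2 ha₁) (add_sub_cancel a 1)

noncomputable def runningSup (f : ℝ → ℝ) (t : ℝ) : ℝ := sSup (f '' Icc 0 t)

noncomputable def truncation (f : ℝ → ℝ) (t : ℝ) : ℝ := exp (-t) / (1 + runningSup f t)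

section RunningSup

variable {f : ℝ → ℝ} (hf : ∀ t, BddAbove (f '' Icc 0 t))
include hf

theorem le_runningSup {s t : ℝ} (hs : 0 ≤ s) (hst : s ≤ t) : f s ≤ runningSup f t :=
  le_csSup (hf t) (mem_image_of_mem f ⟨hs, hst⟩)

theorem runningSup_mono {s t : ℝ} (hs : 0 ≤ s) (hst : s ≤ t) :
    runningSup f s ≤ runningSup f t :=
  csSup_le_csSup (hf t) ((nonempty_Icc.2 hs).image f) (image_mono (Icc_subset_Icc_right hst))

variable (hf₀ : ∀ t ∈ Ici (0 : ℝ), 0 ≤ f t)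
include hf₀

theorem one_le_one_add_runningSup {t : ℝ} (ht : 0 ≤ t) : 1 ≤ 1 + runningSup f t :=
  le_add_of_nonneg_right ((hf₀ 0 self_mem_Ici).trans (le_runningSup hf le_rfl ht))

theorem truncation_pos {t : ℝ} (ht : 0 ≤ t) : 0 < truncation f t :=
  div_pos (exp_pos _) (zero_lt_one.trans_le (one_le_one_add_runningSup hf hf₀ ht))

theorem truncation_le_one {t : ℝ} (ht : 0 ≤ t) : truncation f t ≤ 1 := by
  have h := one_le_one_add_runningSup hf hf₀ ht
  exact div_le_one_of_le₀ ((exp_le_one_iff.2 (neg_nonpos.2 ht)).trans h) (zero_le_one.trans h)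

theorem antitoneOn_truncation : AntitoneOn (truncation f) (Ici 0) := by
  intro s hs t ht hst
  exact div_le_div₀ (exp_pos _).le (exp_le_exp.2 (neg_le_neg hst))
    (zero_lt_one.trans_le (one_le_one_add_runningSup hf hf₀ hs))
    (add_le_add_right (runningSup_mono hf hs hst) 1)

theorem mul_truncation_le_exp_neg {t : ℝ} (ht : 0 ≤ t) : f t * truncation f t ≤ exp (-t) := by
  have hpos : 0 < 1 + runningSup f t :=
    zero_lt_one.trans_le (one_le_one_add_runningSup hf hf₀ ht)
  have hfM : f t ≤ 1 + runningSup f t := by linarith [le_runningSup hf ht le_rfl]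
  rw [truncation, mul_div_assoc', div_le_iff₀ hpos, mul_comm (f t)]
  exact mul_le_mul_of_nonneg_left hfM (exp_pos _).le

end RunningSup

theorem bddAbove_image_Icc_exp_mul_primitive_mul {β : ℝ} {μ g : ℝ → ℝ}
    (hμ : ContinuousOn μ (Ici 0)) (hg : ContinuousOn g (Ici 0)) (t : ℝ) :
    BddAbove ((fun s => exp (β * ∫ u in Ioc 0 s, μ u) * g s) '' Icc 0 t) := by
  have hprim : ContinuousOn (fun s => ∫ u in Ioc 0 s, μ u) (Icc 0 t) :=
    intervalIntegral.continuousOn_primitive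
      ((hμ.mono Icc_subset_Ici_self).integrableOn_compact isCompact_Icc)
  exact (isCompact_Icc.image_of_continuousOn
    ((continuous_exp.comp_continuousOn (continuousOn_const.mul hprim)).mul
      (hg.mono Icc_subset_Ici_self))).bddAbove

theorem setIntegral_Ici_le_of_le_exp_neg_mul {g : ℝ → ℝ} {c : ℝ}
    (hg₀ : ∀ t ∈ Ici (0 : ℝ), 0 ≤ g t) (hg : ∀ t ∈ Ici (0 : ℝ), g t ≤ exp (-t) * c) :
    ∫ t in Ici (0 : ℝ), g t ≤ c := by
  have hexp : IntegrableOn (fun t => exp (-t)) (Ici (0 : ℝ)) := by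
    rw [integrableOn_Ici_iff_integrableOn_Ioi]
    simpa using exp_neg_integrableOn_Ioi 0 one_pos
  calc ∫ t in Ici (0 : ℝ), g t ≤ ∫ t in Ici (0 : ℝ), exp (-t) * c :=
        integral_mono_of_nonneg ((ae_restrict_iff' measurableSet_Ici).2 (.of_forall hg₀))
          (hexp.mul_const c) ((ae_restrict_iff' measurableSet_Ici).2 (.of_forall hg))
    _ = c := by
        rw [integral_mul_const, integral_Ici_eq_integral_Ioi, integral_exp_neg_Ioi_zero, one_mul]

theorem growth_H3a_implies_H3_general (β r : ℝ) (hr : 0 ≤ r)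
    (μ μt : ℝ → ℝ)
    (hμc : ContinuousOn μ (Set.Ici 0))
    (hμtc : ContinuousOn μt (Set.Ici 0)) (hμt0 : ∀ t ∈ Set.Ici (0:ℝ), 0 ≤ μt t)
    (φ : ℝ → ℝ) (hφ0 : ∀ x ∈ Set.Ici (0:ℝ), 0 ≤ φ x)
    (hφconv : ConvexOn ℝ (Set.Ici 0) φ)
    (hφzero : φ 0 = 0)
    (α : ℝ → ℝ)
    (hα : ∀ t, α t = Real.exp (-t) /
      (1 + sSup ((fun s => Real.exp (β * ∫ u in Set.Ioc (0:ℝ) s, μ u) * μt s) ''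
        Set.Icc 0 t))) :
    (∀ t ∈ Set.Ici (0:ℝ), 0 < α t ∧ α t ≤ 1) ∧
      AntitoneOn α (Set.Ici 0) ∧
      ∫ t in Set.Ici (0:ℝ),
          Real.exp (β * ∫ u in Set.Ioc (0:ℝ) t, μ u) * μt t * φ (r * α t) ≤ φ r := by
  set f : ℝ → ℝ := fun s => exp (β * ∫ u in Ioc 0 s, μ u) * μt s
  have hbdd : ∀ t, BddAbove (f '' Icc 0 t) := bddAbove_image_Icc_exp_mul_primitive_mul hμc hμtc
  have hf₀ : ∀ t ∈ Ici (0 : ℝ), 0 ≤ f t := fun t ht => mul_nonneg (exp_pos _).le (hμt0 t ht)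
  obtain rfl : α = truncation f := funext hα
  refine ⟨fun t ht => ⟨truncation_pos hbdd hf₀ ht, truncation_le_one hbdd hf₀ ht⟩,
    antitoneOn_truncation hbdd hf₀, setIntegral_Ici_le_of_le_exp_neg_mul (fun t ht => ?_)
    (fun t ht => ?_)⟩
  · exact mul_nonneg (hf₀ t ht) (hφ0 _ (mul_nonneg hr (truncation_pos hbdd hf₀ ht).le))
  · have hφα : φ (r * truncation f t) ≤ truncation f t * φ r := by
      rw [mul_comm]
      exact hφconv.map_smul_le_smul_map self_mem_Ici hφzero hr
        (truncation_pos hbdd hf₀ ht).le (truncation_le_one hbdd hf₀ ht)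
    calc f t * φ (r * truncation f t) ≤ f t * truncation f t * φ r :=
          (mul_le_mul_of_nonneg_left hφα (hf₀ t ht)).trans_eq (mul_assoc _ _ _).symm
      _ ≤ exp (-t) * φ r :=
          mul_le_mul_of_nonneg_right (mul_truncation_le_exp_neg hbdd hf₀ ht) (hφ0 r hr)

/-- Remark 3.3(iv): with `α(t) := e^{−t}/(1 + sup_{s∈[0,t]} exp(β∫₀ˢμ)·μ̃(s))`,
the process `α` takes values in `(0,1]` and is non-increasing, and for every
nondecreasing convex `φ : [0,∞) → [0,∞)` with `φ(0) = 0` and every `r ≥ 0`,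
`∫₀^∞ exp(β∫₀ᵗμ)·μ̃(t)·φ(r·α(t)) dt ≤ φ(r)`. -/
theorem growth_H3a_implies_H3 (β r : ℝ) (hβ : 0 ≤ β) (hr : 0 ≤ r)
    (μ μt : ℝ → ℝ)
    (hμc : ContinuousOn μ (Set.Ici 0)) (hμ0 : ∀ t ∈ Set.Ici (0:ℝ), 0 ≤ μ t)
    (hμtc : ContinuousOn μt (Set.Ici 0)) (hμt0 : ∀ t ∈ Set.Ici (0:ℝ), 0 ≤ μt t)
    (φ : ℝ → ℝ) (hφ0 : ∀ x ∈ Set.Ici (0:ℝ), 0 ≤ φ x)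
    (hφmono : MonotoneOn φ (Set.Ici 0)) (hφconv : ConvexOn ℝ (Set.Ici 0) φ)
    (hφzero : φ 0 = 0)
    (α : ℝ → ℝ)
    (hα : ∀ t, α t = Real.exp (-t) /
      (1 + sSup ((fun s => Real.exp (β * ∫ u in Set.Ioc (0:ℝ) s, μ u) * μt s) ''
        Set.Icc 0 t))) :
    (∀ t ∈ Set.Ici (0:ℝ), 0 < α t ∧ α t ≤ 1) ∧
      AntitoneOn α (Set.Ici 0) ∧
      ∫ t in Set.Ici (0:ℝ),
          Real.exp (β * ∫ u in Set.Ioc (0:ℝ) t, μ u) * μt t * φ (r * α t) ≤ φ r :=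
  growth_H3a_implies_H3_general β r hr μ μt hμc hμtc hμt0 φ hφ0 hφconv hφzero α hα
end
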